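/- If X and Y are two BSCCs of a quantum Markov chain (H, E) with dim X ≠ dim Y, then X and Y are orthogonal subspaces. -/

import Mathlib

open Matrix Filter Topology
open scoped ComplexOrder

/-- The matrix of the orthogonal projection onto a subspace `X`. -/
noncomputable def projMat {d : ℕ} (X : Submodule ℂ (EuclideanSpace ℂ (Fin d))) :
    Matrix (Fin d) (Fin d) ℂ :=
  Matrix.toEuclideanLin.symm ((X.subtypeL.comp X.orthogonalProjectionOnto).toLinearMap)

/-- The support of an operator: the range of the associated linear map. -/
noncomputable def matSupp {d : ℕ} (A : Matrix (Fin d) (Fin d) ℂ) :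
    Submodule ℂ (EuclideanSpace ℂ (Fin d)) :=
  LinearMap.range (Matrix.toEuclideanLin A)

/-- The outer product `|v⟩⟨v|`. -/
noncomputable def outer {d : ℕ} (v : EuclideanSpace ℂ (Fin d)) : Matrix (Fin d) (Fin d) ℂ :=
  fun i j => v i * star (v j)

/-- The completely positive map `A ↦ ∑ i, E i * A * (E i)†` given by Kraus operators `E`. -/
noncomputable def krausMap {d m : ℕ} (E : Fin m → Matrix (Fin d) (Fin d) ℂ)
    (A : Matrix (Fin d) (Fin d) ℂ) : Matrix (Fin d) (Fin d) ℂ :=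
  ∑ i, E i * A * (E i)ᴴ

/-- The reachable space of a state `ρ`: the join of the supports of all iterates. -/
noncomputable def Reach {d m : ℕ} (E : Fin m → Matrix (Fin d) (Fin d) ℂ)
    (ρ : Matrix (Fin d) (Fin d) ℂ) : Submodule ℂ (EuclideanSpace ℂ (Fin d)) :=
  ⨆ n : ℕ, matSupp ((krausMap E)^[n] ρ)

/-- A BSCC: a nonzero invariant subspace `B` such that the reachable space of every
nonzero vector of `B` is exactly `B`. -/
noncomputable def IsBSCC {d m : ℕ} (E : Fin m → Matrix (Fin d) (Fin d) ℂ)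
    (B : Submodule ℂ (EuclideanSpace ℂ (Fin d))) : Prop :=
  B ≠ ⊥ ∧
  (∀ ρ : Matrix (Fin d) (Fin d) ℂ, ρ.PosSemidef → matSupp ρ ≤ B →
      matSupp (krausMap E ρ) ≤ B) ∧
  (∀ v : EuclideanSpace ℂ (Fin d), v ∈ B → v ≠ 0 → Reach E (outer v) = B)

/-!
Every BSCC `Y` carries a fixed state `σ` with support `Y`, obtained as a limit of Cesàro means
of the orbit of any state supported in `Y`. If `X` is invariant with projection `P`, the mass
`tr (P ρ)` a state puts on `X` can only grow under the channel, and the growth is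
`∑ i, tr (N i ρ (N i)ᴴ)` with `N i = P E i (1 - P)`. For the fixed state `σ` there is no growth,
so every `E i` maps `supp σ ⊓ Xᗮ` into `Xᗮ`: `Y ⊓ Xᗮ` is invariant, and minimality of `Y`
forces `Y ⊓ Xᗮ = ⊥` or `Y ≤ Xᗮ`. If `X` and `Y` were not orthogonal, both `Y ⊓ Xᗮ` and
`X ⊓ Yᗮ` would vanish, whence `dim Y ≤ dim X ≤ dim Y`.
-/

open Set Function in
theorem IsCompact.exists_isFixedPt_of_mapsTo {V : Type*} [NormedAddCommGroup V]
    [NormedSpace ℝ V] {K : Set V} (hK : IsCompact K) (hconv : Convex ℝ K) (hne : K.Nonempty)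
    (f : V →L[ℝ] V) (hf : MapsTo f K K) : ∃ x ∈ K, IsFixedPt f x := by
  obtain ⟨x₀, hx₀⟩ := hne
  set a : ℕ → V := fun n => birkhoffAverage ℝ f id (n + 1) x₀
  have ha : ∀ n, a n ∈ K := fun n => by
    simp only [a, birkhoffAverage, birkhoffSum, Finset.smul_sum, id]
    refine hconv.sum_mem (fun _ _ => by positivity) ?_ fun k _ => hf.iterate k hx₀
    simp [Finset.sum_const, mul_inv_cancel₀ (Nat.cast_add_one_ne_zero n : (n : ℝ) + 1 ≠ 0)]
  have hfa : ∀ n, f (a n) = birkhoffAverage ℝ f id (n + 1) (f x₀) := fun n => by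
    rw [map_birkhoffAverage ℝ ℝ f]
    simp only [birkhoffAverage, birkhoffSum, Function.comp_apply, id, (Commute.self_iterate f _).eq]
  have hdrift : Tendsto (fun n => f (a n) - a n) atTop (𝓝 0) := by
    simp only [hfa, a]
    exact (tendsto_birkhoffAverage_apply_sub_birkhoffAverage ℝ
      (hK.isBounded.subset (range_subset_iff.2 fun k => hf.iterate k hx₀))).comp
      (tendsto_add_atTop_nat 1)
  obtain ⟨y, hyK, φ, hφ, hlim⟩ := hK.tendsto_subseq ha
  refine ⟨y, hyK, tendsto_nhds_unique ((f.continuous.tendsto y).comp hlim) ?_⟩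
  simpa [comp_def] using (hdrift.comp hφ.tendsto_atTop).add hlim

lemma IsStarProjection.sum_star_mul_self_offDiag {R ι : Type*} [Ring R] [StarRing R]
    {s : Finset ι} {K : ι → R} {P : R} (hP : IsStarProjection P)
    (hK : ∑ i ∈ s, star (K i) * K i = 1) (hinv : ∀ i ∈ s, P * K i * P = K i * P) :
    ∑ i ∈ s, star (P * K i * (1 - P)) * (P * K i * (1 - P)) =
      ∑ i ∈ s, star (K i) * P * K i - P := by
  set M := ∑ i ∈ s, star (K i) * P * K i
  have hPs : star P = P := hP.isSelfAdjoint.star_eq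
  have hMP : M * P = P := calc
    M * P = ∑ i ∈ s, star (K i) * (P * K i * P) := by
      simp only [M, Finset.sum_mul, mul_assoc]
    _ = ∑ i ∈ s, star (K i) * K i * P :=
      Finset.sum_congr rfl fun i hi => by rw [hinv i hi, mul_assoc]
    _ = P := by rw [← Finset.sum_mul, hK, one_mul]
  have hPM : P * M = P := by
    have hM : star M = M := by simp [M, star_sum, mul_assoc, hPs]
    simpa [hPs, hM] using congrArg star hMP
  have hterm : ∀ i, star (P * K i * (1 - P)) * (P * K i * (1 - P)) =
      (1 - P) * (star (K i) * P * K i) * (1 - P) := fun i => by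
    simp only [star_mul, star_sub, star_one, hPs, mul_assoc, ← mul_assoc P P,
      hP.isIdempotentElem.eq]
  rw [Finset.sum_congr rfl fun i _ => hterm i, ← Finset.sum_mul, ← Finset.mul_sum]
  calc (1 - P) * M * (1 - P) = M - P * M - M * P + P * M * P := by noncomm_ring
    _ = M - P := by rw [hPM, hMP, hP.isIdempotentElem.eq]; abel

section PosSemidef

variable {n 𝕜 : Type*} [RCLike 𝕜]

lemma convex_setOf_posSemidef : Convex ℝ {A : Matrix n n 𝕜 | A.PosSemidef} :=
  fun _ hA _ hB _ _ ha hb _ => (hA.smul ha).add (hB.smul hb)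

variable [Fintype n]

lemma isClosed_setOf_posSemidef : IsClosed {A : Matrix n n 𝕜 | A.PosSemidef} := by
  simp only [posSemidef_iff_dotProduct_mulVec, Set.ofPred_and, Set.ofPred_forall]
  refine .inter (isClosed_eq continuous_id.matrix_conjTranspose continuous_id)
    (isClosed_iInter fun x => isClosed_le continuous_const ?_)
  fun_prop

open scoped MatrixOrder in
lemma Matrix.PosSemidef.norm_apply_le_re_trace {A : Matrix n n 𝕜} (hA : A.PosSemidef)
    (i j : n) : ‖A i j‖ ≤ RCLike.re A.trace := by
  classical
  obtain ⟨B, rfl⟩ := CStarAlgebra.nonneg_iff_eq_star_mul_self.mp hA.nonneg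
  set c : n → EuclideanSpace 𝕜 n := fun l => WithLp.toLp 2 (Bᵀ l)
  have hentry : ∀ k l, (star B * B) k l = inner 𝕜 (c k) (c l) := fun k l =>
    (inner_matrix_col_col B B k l).symm
  have hcol : ∀ l, ‖c l‖ ^ 2 ≤ RCLike.re (star B * B).trace := fun l => by
    have hdiag : ∀ k, RCLike.re ((star B * B) k k) = ‖c k‖ ^ 2 := fun k => by
      rw [hentry, inner_self_eq_norm_sq]
    simp only [trace, diag_apply, map_sum, hdiag]
    exact Finset.single_le_sum (f := fun k => ‖c k‖ ^ 2) (fun k _ => by positivity)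
      (Finset.mem_univ l)
  calc ‖(star B * B) i j‖ ≤ ‖c i‖ * ‖c j‖ := hentry i j ▸ norm_inner_le_norm _ _
    _ ≤ RCLike.re (star B * B).trace := by
      nlinarith [hcol i, hcol j, sq_nonneg (‖c i‖ - ‖c j‖)]

lemma mulVec_eq_zero_of_sum_mulVec_eq_zero {ι : Type*} {s : Finset ι} {T : ι → Matrix n n 𝕜}
    (hT : ∀ i ∈ s, (T i).PosSemidef) {v : n → 𝕜} (hv : (∑ i ∈ s, T i) *ᵥ v = 0) {j : ι}
    (hj : j ∈ s) : T j *ᵥ v = 0 := by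
  have hsum : ∑ i ∈ s, star v ⬝ᵥ T i *ᵥ v = 0 := by
    rw [← dotProduct_sum, ← Matrix.sum_mulVec, hv, dotProduct_zero]
  rw [← (hT j hj).dotProduct_mulVec_zero_iff]
  exact (Finset.sum_eq_zero_iff_of_nonneg fun i hi => (hT i hi).dotProduct_mulVec_nonneg v).1
    hsum j hj

end PosSemidef

section QuantumMarkovChain

variable {d m : ℕ}

lemma matSupp_eq_bot_iff {A : Matrix (Fin d) (Fin d) ℂ} : matSupp A = ⊥ ↔ A = 0 := by
  rw [matSupp, LinearMap.range_eq_bot, LinearEquiv.map_eq_zero_iff]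

lemma matSupp_mul (A B : Matrix (Fin d) (Fin d) ℂ) :
    matSupp (A * B) = (matSupp B).map (toEuclideanLin A) := by
  rw [matSupp, matSupp, toLpLin_mul_same, LinearMap.range_comp]

lemma matSupp_mul_conjTranspose_self (N : Matrix (Fin d) (Fin d) ℂ) :
    matSupp (N * Nᴴ) = matSupp N := by
  rw [matSupp, matSupp, toLpLin_mul_same, toEuclideanLin_conjTranspose_eq_adjoint,
    LinearMap.range_self_comp_adjoint]

open scoped MatrixOrder in
lemma Matrix.PosSemidef.matSupp_conj {A : Matrix (Fin d) (Fin d) ℂ} (hA : A.PosSemidef)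
    (M : Matrix (Fin d) (Fin d) ℂ) :
    matSupp (M * A * Mᴴ) = (matSupp A).map (toEuclideanLin M) := by
  obtain ⟨B, rfl⟩ := CStarAlgebra.nonneg_iff_eq_star_mul_self.mp hA.nonneg
  have hconj : M * (star B * B) * Mᴴ = (M * Bᴴ) * (M * Bᴴ)ᴴ := by
    simp only [star_eq_conjTranspose, conjTranspose_mul, conjTranspose_conjTranspose,
      Matrix.mul_assoc]
  rw [hconj, matSupp_mul_conjTranspose_self, matSupp_mul, star_eq_conjTranspose,
    ← matSupp_mul_conjTranspose_self Bᴴ, conjTranspose_conjTranspose]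

lemma matSupp_sum_le {ι : Type*} (s : Finset ι) (T : ι → Matrix (Fin d) (Fin d) ℂ) :
    matSupp (∑ i ∈ s, T i) ≤ ⨆ i ∈ s, matSupp (T i) := by
  rintro _ ⟨v, rfl⟩
  rw [map_sum, LinearMap.sum_apply]
  exact Submodule.sum_mem_biSup fun i _ => LinearMap.mem_range_self _ v

lemma matSupp_le_matSupp_sum {ι : Type*} {s : Finset ι} {T : ι → Matrix (Fin d) (Fin d) ℂ}
    (hT : ∀ i ∈ s, (T i).PosSemidef) {j : ι} (hj : j ∈ s) :
    matSupp (T j) ≤ matSupp (∑ i ∈ s, T i) := by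
  have hsum : (∑ i ∈ s, T i).PosSemidef := posSemidef_sum s hT
  rw [← Submodule.orthogonal_le_orthogonal_iff, matSupp, matSupp,
    (isSymmetric_toEuclideanLin_iff.2 hsum.isHermitian).orthogonal_range,
    (isSymmetric_toEuclideanLin_iff.2 (hT j hj).isHermitian).orthogonal_range]
  intro v hv
  simp only [LinearMap.mem_ker, toLpLin_apply, WithLp.toLp_eq_zero] at hv ⊢
  exact mulVec_eq_zero_of_sum_mulVec_eq_zero hT hv hj

lemma posSemidef_outer (v : EuclideanSpace ℂ (Fin d)) : (outer v).PosSemidef :=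
  posSemidef_vecMulVec_self_star v.ofLp

lemma matSupp_outer (v : EuclideanSpace ℂ (Fin d)) : matSupp (outer v) = ℂ ∙ v := by
  have hrankOne : outer v = toEuclideanLin.symm (InnerProductSpace.rankOne ℂ v v) := by
    rw [InnerProductSpace.symm_toEuclideanLin_rankOne]
    rfl
  rw [matSupp, hrankOne, LinearEquiv.apply_symm_apply]
  refine le_antisymm ?_ ?_
  · rintro _ ⟨w, rfl⟩
    simpa [InnerProductSpace.rankOne_apply] using
      Submodule.smul_mem _ _ (Submodule.mem_span_singleton_self v)
  · rw [Submodule.span_singleton_le_iff_mem]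
    rcases eq_or_ne v 0 with rfl | hv
    · exact zero_mem _
    · exact ⟨(inner ℂ v v)⁻¹ • v, by simp [InnerProductSpace.rankOne_apply, smul_smul, hv]⟩

lemma matSupp_outer_le_iff {v : EuclideanSpace ℂ (Fin d)}
    {W : Submodule ℂ (EuclideanSpace ℂ (Fin d))} : matSupp (outer v) ≤ W ↔ v ∈ W := by
  rw [matSupp_outer, Submodule.span_singleton_le_iff_mem]

section Kraus

variable (E : Fin m → Matrix (Fin d) (Fin d) ℂ)

lemma posSemidef_krausMap {A : Matrix (Fin d) (Fin d) ℂ} (hA : A.PosSemidef) :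
    (krausMap E A).PosSemidef :=
  posSemidef_sum _ fun i _ => hA.mul_mul_conjTranspose_same (E i)

lemma posSemidef_krausMap_iterate {A : Matrix (Fin d) (Fin d) ℂ} (hA : A.PosSemidef) (n : ℕ) :
    ((krausMap E)^[n] A).PosSemidef := by
  induction n with
  | zero => exact hA
  | succ n ih => rw [Function.iterate_succ_apply']; exact posSemidef_krausMap E ih

lemma trace_krausMap_mul (A B : Matrix (Fin d) (Fin d) ℂ) :
    (krausMap E A * B).trace = (A * ∑ i, (E i)ᴴ * B * E i).trace := by
  simp only [krausMap, Finset.sum_mul, Finset.mul_sum, trace_sum]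
  refine Finset.sum_congr rfl fun i _ => ?_
  simp only [Matrix.mul_assoc]
  rw [trace_mul_comm]
  simp only [Matrix.mul_assoc]

lemma trace_krausMap (hE : ∑ i, (E i)ᴴ * E i = 1) (A : Matrix (Fin d) (Fin d) ℂ) :
    (krausMap E A).trace = A.trace := by
  simpa [Matrix.mul_one, ← Finset.sum_mul, hE] using trace_krausMap_mul E A 1

lemma matSupp_krausMap {ρ : Matrix (Fin d) (Fin d) ℂ} (hρ : ρ.PosSemidef) :
    matSupp (krausMap E ρ) = ⨆ i, (matSupp ρ).map (toEuclideanLin (E i)) := by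
  refine le_antisymm ?_ (iSup_le fun i => ?_)
  · refine (matSupp_sum_le _ _).trans (iSup_mono fun i => ?_)
    simp only [Finset.mem_univ, iSup_pos, (hρ.matSupp_conj (E i)).le]
  · rw [← hρ.matSupp_conj]
    exact matSupp_le_matSupp_sum (fun j _ => hρ.mul_mul_conjTranspose_same (E j))
      (Finset.mem_univ i)

noncomputable def krausMapₗ : Matrix (Fin d) (Fin d) ℂ →ₗ[ℂ] Matrix (Fin d) (Fin d) ℂ where
  toFun := krausMap E
  map_add' A B := by simp [krausMap, Matrix.mul_add, Matrix.add_mul, Finset.sum_add_distrib]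
  map_smul' c A := by simp [krausMap, Finset.smul_sum]

def IsKrausInvariant (W : Submodule ℂ (EuclideanSpace ℂ (Fin d))) : Prop :=
  ∀ i, W.map (toEuclideanLin (E i)) ≤ W

end Kraus

variable {E : Fin m → Matrix (Fin d) (Fin d) ℂ}

lemma IsKrausInvariant.matSupp_krausMap_le {W : Submodule ℂ (EuclideanSpace ℂ (Fin d))}
    (hW : IsKrausInvariant E W) {ρ : Matrix (Fin d) (Fin d) ℂ} (hρ : ρ.PosSemidef)
    (hρW : matSupp ρ ≤ W) : matSupp (krausMap E ρ) ≤ W := by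
  rw [matSupp_krausMap E hρ]
  exact iSup_le fun i => (Submodule.map_mono hρW).trans (hW i)

lemma IsKrausInvariant.reach_le {W : Submodule ℂ (EuclideanSpace ℂ (Fin d))}
    (hW : IsKrausInvariant E W) {ρ : Matrix (Fin d) (Fin d) ℂ} (hρ : ρ.PosSemidef)
    (hρW : matSupp ρ ≤ W) : Reach E ρ ≤ W := by
  refine iSup_le fun n => ?_
  induction n with
  | zero => exact hρW
  | succ n ih =>
    rw [Function.iterate_succ_apply']
    exact hW.matSupp_krausMap_le (posSemidef_krausMap_iterate E hρ n) ih

lemma isKrausInvariant_matSupp {σ : Matrix (Fin d) (Fin d) ℂ} (hσ : σ.PosSemidef)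
    (hfix : krausMap E σ = σ) : IsKrausInvariant E (matSupp σ) := fun i => by
  conv_rhs => rw [← hfix, matSupp_krausMap E hσ]
  exact le_iSup (fun i => (matSupp σ).map (toEuclideanLin (E i))) i

lemma IsBSCC.isKrausInvariant {B : Submodule ℂ (EuclideanSpace ℂ (Fin d))} (hB : IsBSCC E B) :
    IsKrausInvariant E B := fun i => by
  rw [Submodule.map_le_iff_le_comap]
  intro w hw
  have hKw := hB.2.1 _ (posSemidef_outer w) (matSupp_outer_le_iff.2 hw)
  rw [matSupp_krausMap E (posSemidef_outer w), iSup_le_iff] at hKw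
  exact hKw i (Submodule.mem_map_of_mem (matSupp_outer_le_iff.1 le_rfl))

lemma IsBSCC.le_of_isKrausInvariant {B W : Submodule ℂ (EuclideanSpace ℂ (Fin d))}
    (hB : IsBSCC E B) (hW : IsKrausInvariant E W) (hBW : B ⊓ W ≠ ⊥) : B ≤ W := by
  obtain ⟨w, hw, hw0⟩ := Submodule.exists_mem_ne_zero_of_ne_bot hBW
  rw [← hB.2.2 w (Submodule.mem_inf.1 hw).1 hw0]
  exact hW.reach_le (posSemidef_outer w) (matSupp_outer_le_iff.2 (Submodule.mem_inf.1 hw).2)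

lemma setOf_matSupp_le_eq (B : Submodule ℂ (EuclideanSpace ℂ (Fin d))) :
    {σ : Matrix (Fin d) (Fin d) ℂ | matSupp σ ≤ B} =
      ⨅ v, B.comap (LinearMap.applyₗ v ∘ₗ
        (toEuclideanLin : Matrix (Fin d) (Fin d) ℂ ≃ₗ[ℂ] _).toLinearMap) := by
  ext σ
  simp [matSupp, LinearMap.range_le_iff_comap, Submodule.eq_top_iff']

def supportedStates (t : ℂ) (B : Submodule ℂ (EuclideanSpace ℂ (Fin d))) :
    Set (Matrix (Fin d) (Fin d) ℂ) :=
  {σ | σ.PosSemidef ∧ σ.trace = t ∧ matSupp σ ≤ B}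

lemma convex_supportedStates (t : ℂ) (B : Submodule ℂ (EuclideanSpace ℂ (Fin d))) :
    Convex ℝ (supportedStates t B) := by
  have htrace : Convex ℝ {σ : Matrix (Fin d) (Fin d) ℂ | σ.trace = t} :=
    (convex_singleton t).linear_preimage (traceLinearMap (Fin d) ℝ ℂ)
  have hsupp : Convex ℝ {σ : Matrix (Fin d) (Fin d) ℂ | matSupp σ ≤ B} := by
    rw [setOf_matSupp_le_eq]
    exact (Submodule.restrictScalars ℝ (⨅ v : EuclideanSpace ℂ (Fin d), _)).convex
  exact convex_setOf_posSemidef.inter (htrace.inter hsupp)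

section Norm

attribute [local instance] Matrix.normedAddCommGroup Matrix.normedSpace

lemma isCompact_supportedStates (t : ℂ) (B : Submodule ℂ (EuclideanSpace ℂ (Fin d))) :
    IsCompact (supportedStates t B) := by
  have hsupp : IsClosed {σ : Matrix (Fin d) (Fin d) ℂ | matSupp σ ≤ B} := by
    rw [setOf_matSupp_le_eq]
    exact Submodule.closed_of_finiteDimensional _
  refine Metric.isCompact_of_isClosed_isBounded (isClosed_setOf_posSemidef.inter
      ((isClosed_eq continuous_id.matrix_trace continuous_const).inter hsupp))
    (isBounded_iff_forall_norm_le.2 ⟨‖t‖, fun σ ⟨hσ, htr, _⟩ => ?_⟩)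
  refine (norm_le_iff (norm_nonneg t)).2 fun i j => (hσ.norm_apply_le_re_trace i j).trans ?_
  rw [htr]
  exact RCLike.re_le_norm t

lemma IsBSCC.exists_fixed_state (hE : ∑ i, (E i)ᴴ * E i = 1)
    {B : Submodule ℂ (EuclideanSpace ℂ (Fin d))} (hB : IsBSCC E B) :
    ∃ σ, σ.PosSemidef ∧ krausMap E σ = σ ∧ matSupp σ = B := by
  obtain ⟨v, hvB, hv0⟩ := Submodule.exists_mem_ne_zero_of_ne_bot hB.1
  have hmaps : Set.MapsTo (krausMap E) (supportedStates (outer v).trace B)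
      (supportedStates (outer v).trace B) := fun σ ⟨hσ, htr, hsupp⟩ =>
    ⟨posSemidef_krausMap E hσ, (trace_krausMap E hE σ).trans htr,
      hB.isKrausInvariant.matSupp_krausMap_le hσ hsupp⟩
  obtain ⟨σ, ⟨hσ, htr, hsupp⟩, hfix⟩ :=
    (isCompact_supportedStates _ B).exists_isFixedPt_of_mapsTo (convex_supportedStates _ B)
      ⟨outer v, posSemidef_outer v, rfl, matSupp_outer_le_iff.2 hvB⟩
      ((krausMapₗ E).restrictScalars ℝ).toContinuousLinearMap hmaps
  have hσ0 : matSupp σ ≠ ⊥ := by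
    rw [Ne, matSupp_eq_bot_iff]
    rintro rfl
    rw [trace_zero, eq_comm, (posSemidef_outer v).trace_eq_zero_iff, ← matSupp_eq_bot_iff,
      matSupp_outer, Submodule.span_singleton_eq_bot] at htr
    exact hv0 htr
  refine ⟨σ, hσ, hfix, le_antisymm hsupp ?_⟩
  exact hB.le_of_isKrausInvariant (isKrausInvariant_matSupp hσ hfix)
    (by rwa [inf_eq_right.2 hsupp])

end Norm

lemma toEuclideanLin_projMat (X : Submodule ℂ (EuclideanSpace ℂ (Fin d))) :
    toEuclideanLin (projMat X) = X.starProjection.toLinearMap := by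
  rw [projMat, LinearEquiv.apply_symm_apply]
  rfl

lemma isStarProjection_projMat (X : Submodule ℂ (EuclideanSpace ℂ (Fin d))) :
    IsStarProjection (projMat X) := by
  refine ⟨toEuclideanLin.injective (LinearMap.ext fun v => ?_), ?_⟩
  · simp only [toLpLin_mul_same, toEuclideanLin_projMat, LinearMap.comp_apply,
      ContinuousLinearMap.coe_coe]
    exact X.starProjection_eq_self_iff.2 (X.starProjection_apply_mem v)
  · refine isSymmetric_toEuclideanLin_iff.1 ?_
    rw [toEuclideanLin_projMat]
    exact X.starProjection_isSymmetric

lemma IsKrausInvariant.projMat_mul_mul_projMat {X : Submodule ℂ (EuclideanSpace ℂ (Fin d))}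
    (hX : IsKrausInvariant E X) (i : Fin m) :
    projMat X * E i * projMat X = E i * projMat X := by
  refine toEuclideanLin.injective (LinearMap.ext fun v => ?_)
  simp only [toLpLin_mul_same, toEuclideanLin_projMat, LinearMap.comp_apply,
    ContinuousLinearMap.coe_coe]
  exact X.starProjection_eq_self_iff.2
    (hX i (Submodule.mem_map_of_mem (X.starProjection_apply_mem v)))

lemma IsKrausInvariant.map_inf_orthogonal_le (hE : ∑ i, (E i)ᴴ * E i = 1)
    {X : Submodule ℂ (EuclideanSpace ℂ (Fin d))} (hX : IsKrausInvariant E X)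
    {σ : Matrix (Fin d) (Fin d) ℂ} (hσ : σ.PosSemidef) (hfix : krausMap E σ = σ) (i : Fin m) :
    (matSupp σ ⊓ Xᗮ).map (toEuclideanLin (E i)) ≤ Xᗮ := by
  set P := projMat X
  set N : Fin m → Matrix (Fin d) (Fin d) ℂ := fun i => P * E i * (1 - P)
  have hN : ∑ i, (N i)ᴴ * N i = ∑ i, (E i)ᴴ * P * E i - P :=
    (isStarProjection_projMat X).sum_star_mul_self_offDiag hE
      fun i _ => hX.projMat_mul_mul_projMat i
  have htr : (krausMap N σ).trace = 0 := by
    rw [← Matrix.mul_one (krausMap N σ), trace_krausMap_mul]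
    simp only [Matrix.mul_one]
    rw [hN, Matrix.mul_sub, trace_sub, ← trace_krausMap_mul, hfix, sub_self]
  have hNσ : (matSupp σ).map (toEuclideanLin (N i)) = ⊥ := by
    have h0 := (posSemidef_krausMap N hσ).trace_eq_zero_iff.1 htr
    rw [← matSupp_eq_bot_iff, matSupp_krausMap N hσ, iSup_eq_bot] at h0
    exact h0 i
  rintro _ ⟨y, ⟨hyσ, hyX⟩, rfl⟩
  have hNy : toEuclideanLin (N i) y = 0 := by
    rw [← Submodule.mem_bot ℂ, ← hNσ]
    exact Submodule.mem_map_of_mem hyσ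
  rw [← X.starProjection_apply_eq_zero_iff]
  simpa [N, P, toLpLin_mul_same, toEuclideanLin_projMat,
    X.starProjection_apply_eq_zero_iff.2 hyX] using hNy

lemma IsBSCC.le_orthogonal_of_inf_ne_bot (hE : ∑ i, (E i)ᴴ * E i = 1)
    {X Y : Submodule ℂ (EuclideanSpace ℂ (Fin d))} (hX : IsKrausInvariant E X)
    (hY : IsBSCC E Y) (hYX : Y ⊓ Xᗮ ≠ ⊥) : Y ≤ Xᗮ := by
  obtain ⟨σ, hσ, hfix, rfl⟩ := hY.exists_fixed_state hE
  have hW : IsKrausInvariant E (matSupp σ ⊓ Xᗮ) := fun i =>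
    le_inf ((Submodule.map_mono inf_le_left).trans (isKrausInvariant_matSupp hσ hfix i))
      (hX.map_inf_orthogonal_le hE hσ hfix i)
  exact (hY.le_of_isKrausInvariant hW (by rwa [inf_left_idem])).trans inf_le_right

lemma finrank_le_of_inf_orthogonal_eq_bot {X Y : Submodule ℂ (EuclideanSpace ℂ (Fin d))}
    (h : Y ⊓ Xᗮ = ⊥) : Module.finrank ℂ Y ≤ Module.finrank ℂ X := by
  have hY := Submodule.finrank_add_finrank_le_of_disjoint (disjoint_iff.2 h)
  have hX := X.finrank_add_finrank_orthogonal
  omega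

end QuantumMarkovChain

/-- BSCCs of different dimensions are orthogonal. -/
theorem stmt10 {d m : ℕ} (E : Fin m → Matrix (Fin d) (Fin d) ℂ)
    (hE : ∑ i, (E i)ᴴ * E i = 1)
    (X Y : Submodule ℂ (EuclideanSpace ℂ (Fin d))) (hX : IsBSCC E X) (hY : IsBSCC E Y)
    (hdim : Module.finrank ℂ X ≠ Module.finrank ℂ Y) :
    ∀ x ∈ X, ∀ y ∈ Y, inner ℂ x y = (0 : ℂ) := by
  have hortho : X ⟂ Y := by
    by_cases hXY : X ⊓ Yᗮ = ⊥
    · by_cases hYX : Y ⊓ Xᗮ = ⊥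
      · exact absurd (le_antisymm (finrank_le_of_inf_orthogonal_eq_bot hXY)
          (finrank_le_of_inf_orthogonal_eq_bot hYX)) hdim
      · exact (Submodule.isOrtho_iff_le.2
          (hY.le_orthogonal_of_inf_ne_bot hE hX.isKrausInvariant hYX)).symm
    · exact Submodule.isOrtho_iff_le.2 (hX.le_orthogonal_of_inf_ne_bot hE hY.isKrausInvariant hXY)
  exact fun x hx y hy => hortho.inner_eq hx hy
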